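/- Let t ∈ (1/3, 1). Then for every λ ∈ Λ(t) = {λ ∈ (0,1/3] : t ∈ C_λ − C_λ}, the unique coding (i_n) ∈ {-1,0,1}^ℕ of t in base λ (i.e., (1-λ)·∑ i_n λ^{n-1} = t) satisfies 1(-1)^∞ ≼ (i_n) ≼ 1^∞, i.e., i_1 = 1; and if λ₁ < λ₂ are two elements of Λ(t) ∩ (0,1/3) with codings (i_n), (j_n) respectively, then (i_n) ≺ (j_n) lexicographically (the coding map is strictly increasing). -/

import Mathlib

open scoped Pointwise

/-- `PiFun i λ = (1-λ) ∑_{n≥0} i_n λ^n`, the series Π from the paper (0-based indexing). -/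
noncomputable def PiFun (i : ℕ → ℝ) (l : ℝ) : ℝ := (1 - l) * ∑' n : ℕ, i n * l ^ n

/-- `i` is a sequence over the alphabet `{-1,0,1}`. -/
def IsCoding (i : ℕ → ℝ) : Prop := ∀ n, i n = -1 ∨ i n = 0 ∨ i n = 1

/-- Strict lexicographic order on sequences. -/
def LexLt (i j : ℕ → ℝ) : Prop := ∃ m, (∀ n, n < m → i n = j n) ∧ i m < j m

/-- Non-strict lexicographic order on sequences. -/
def LexLe (i j : ℕ → ℝ) : Prop := LexLt i j ∨ i = j

-- `rho i j = 3^{-k}` where `k` is the first (0-based) index at which the sequences differ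
-- (this equals `3^{1-k}` for 1-based indexing as in the paper).
open Classical in
noncomputable def rho (i j : ℕ → ℝ) : ℝ :=
  if i = j then 0 else (3 : ℝ) ^ (-((sInf {n : ℕ | i n ≠ j n} : ℕ) : ℤ))

/-- The middle-`(1-2λ)` Cantor set `C_λ`. -/
def Cset (l : ℝ) : Set ℝ :=
  {x | ∃ i : ℕ → ℝ, (∀ n, i n = 0 ∨ i n = 1) ∧ x = (1 - l) * ∑' n : ℕ, i n * l ^ n}

/-- `Λ(t) = {λ ∈ (0,1/3] : t ∈ C_λ - C_λ}`. -/
def Lam (t : ℝ) : Set ℝ := {l | l ∈ Set.Ioc (0 : ℝ) (1/3) ∧ t ∈ Cset l - Cset l}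

/-
Splitting off the first digit, `PiFun i λ = (1 - λ) i₀ + λ · PiFun (shift i) λ` with
`|PiFun (shift i) λ| ≤ 1`; so a first digit `≤ 0` forces `PiFun i λ ≤ λ ≤ 1/3 < t`, hence `i₀ = 1`.

Digit differences of two codings lie in `[-2, 2]`, so for `λ < 1/3` the first differing digit
outweighs the tail (`1 - λ > 2λ`), and `i ≺ j` implies `PiFun i λ < PiFun j λ`. On the other hand
`PiFun i λ = 1 - ∑ (1 - iₙ) λⁿ (1 - λ)` and every `λⁿ (1 - λ)` with `n ≥ 1` is strictly increasing on
`[0, 1/2]`, so `λ ↦ PiFun i λ` is strictly decreasing there when `i₀ = 1` and `i ≠ 1^∞`. If `λ₁ < λ₂`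
code `t` by `i` and `j`, then `PiFun i λ₂ < PiFun i λ₁ = t = PiFun j λ₂`, which forces `i ≺ j`.
-/

lemma norm_mul_pow_le {f : ℕ → ℝ} {C l : ℝ} (hf : ∀ n, |f n| ≤ C) (h0 : 0 ≤ l) (n : ℕ) :
    ‖f n * l ^ n‖ ≤ C * l ^ n := by
  rw [Real.norm_eq_abs, abs_mul, abs_pow, abs_of_nonneg h0]
  exact mul_le_mul_of_nonneg_right (hf n) (pow_nonneg h0 n)

lemma summable_mul_pow_of_abs_le {f : ℕ → ℝ} {C l : ℝ} (hf : ∀ n, |f n| ≤ C)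
    (h0 : 0 ≤ l) (h1 : l < 1) : Summable (fun n => f n * l ^ n) :=
  Summable.of_norm_bounded ((summable_geometric_of_lt_one h0 h1).mul_left C)
    (norm_mul_pow_le hf h0)

lemma abs_piFun_le {f : ℕ → ℝ} {C l : ℝ} (hf : ∀ n, |f n| ≤ C) (h0 : 0 ≤ l) (h1 : l < 1) :
    |PiFun f l| ≤ C := by
  have hsum : |∑' n, f n * l ^ n| ≤ C * (1 - l)⁻¹ :=
    tsum_of_norm_bounded ((hasSum_geometric_of_lt_one h0 h1).mul_left C) (norm_mul_pow_le hf h0)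
  have hl : 0 < 1 - l := by linarith
  calc |PiFun f l| = (1 - l) * |∑' n, f n * l ^ n| := by
        rw [PiFun, abs_mul, abs_of_pos hl]
    _ ≤ (1 - l) * (C * (1 - l)⁻¹) := mul_le_mul_of_nonneg_left hsum hl.le
    _ = C := by field_simp

lemma piFun_one {l : ℝ} (h0 : 0 ≤ l) (h1 : l < 1) : PiFun 1 l = 1 := by
  simp only [PiFun, Pi.one_apply, one_mul, tsum_geometric_of_lt_one h0 h1]
  exact mul_inv_cancel₀ (by linarith)

lemma piFun_sub {f g : ℕ → ℝ} {l : ℝ} (hf : Summable (fun n => f n * l ^ n))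
    (hg : Summable (fun n => g n * l ^ n)) : PiFun (f - g) l = PiFun f l - PiFun g l := by
  simp only [PiFun, Pi.sub_apply, sub_mul, hf.tsum_sub hg, mul_sub]

lemma piFun_eq_head_add {f : ℕ → ℝ} {l : ℝ} (hf : Summable (fun n => f n * l ^ n)) :
    PiFun f l = (1 - l) * f 0 + l * PiFun (fun n => f (n + 1)) l := by
  have hshift : ∑' n, f (n + 1) * l ^ (n + 1) = l * ∑' n, f (n + 1) * l ^ n := by
    rw [← tsum_mul_left]
    exact tsum_congr fun n => by ring
  rw [PiFun, PiFun, hf.tsum_eq_zero_add, hshift]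
  ring

lemma piFun_eq_pow_mul_of_eq_zero {f : ℕ → ℝ} {l : ℝ} (hf : Summable (fun n => f n * l ^ n))
    {m : ℕ} (hz : ∀ n < m, f n = 0) : PiFun f l = l ^ m * PiFun (fun n => f (n + m)) l := by
  have hhead : ∑ n ∈ Finset.range m, f n * l ^ n = 0 :=
    Finset.sum_eq_zero fun n hn => by rw [hz n (Finset.mem_range.mp hn), zero_mul]
  have htail : ∑' n, f (n + m) * l ^ (n + m) = l ^ m * ∑' n, f (n + m) * l ^ n := by
    rw [← tsum_mul_left]
    exact tsum_congr fun n => by ring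
  rw [PiFun, PiFun, ← hf.sum_add_tsum_nat_add m, hhead, zero_add, htail]
  ring

lemma piFun_pos_of_one_le_head {f : ℕ → ℝ} {l : ℝ} (hf : ∀ n, |f n| ≤ 2) (hf0 : 1 ≤ f 0)
    (h0 : 0 ≤ l) (h1 : l < 1/3) : 0 < PiFun f l := by
  have htail := (abs_le.mp (abs_piFun_le (fun n => hf (n + 1)) h0 (by linarith))).1
  rw [piFun_eq_head_add (summable_mul_pow_of_abs_le hf h0 (by linarith))]
  nlinarith

lemma pow_succ_mul_one_sub_lt_of_lt {u v : ℝ} (hu : 0 ≤ u) (huv : u < v) (hv : v ≤ 1/2)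
    (m : ℕ) : u ^ (m + 1) * (1 - u) < v ^ (m + 1) * (1 - v) := by
  have hvm : u ^ m ≤ v ^ m := pow_le_pow_left₀ hu huv.le m
  have hdiff : v ^ m * (v - u) ≤ v ^ (m + 1) - u ^ (m + 1) := by
    rw [pow_succ, pow_succ]
    nlinarith [mul_le_mul_of_nonneg_right hvm hu]
  have hlt : u ^ (m + 1) < v ^ m * (1 - v) := by
    calc u ^ (m + 1) ≤ v ^ m * u := by
          rw [pow_succ]; exact mul_le_mul_of_nonneg_right hvm hu
      _ < v ^ m * (1 - v) :=
          mul_lt_mul_of_pos_left (by linarith) (pow_pos (hu.trans_lt huv) m)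
  nlinarith [mul_lt_mul_of_pos_right hlt (sub_pos.mpr huv),
    mul_le_mul_of_nonneg_left hdiff (show (0 : ℝ) ≤ 1 - v by linarith)]

lemma strictMonoOn_piFun_of_nonneg {g : ℕ → ℝ} {C : ℝ} (hg0 : g 0 = 0) (hg : ∀ n, 0 ≤ g n)
    (hC : ∀ n, g n ≤ C) {k : ℕ} (hk : 0 < g k) : StrictMonoOn (PiFun g) (Set.Icc 0 (1/2)) := by
  have hform : ∀ l, PiFun g l = ∑' n, g n * (l ^ n * (1 - l)) := fun l => by
    rw [PiFun, ← tsum_mul_left]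
    exact tsum_congr fun n => by ring
  have hsum : ∀ l ∈ Set.Icc (0 : ℝ) (1/2), Summable (fun n => g n * (l ^ n * (1 - l))) :=
    fun l hl => ((summable_mul_pow_of_abs_le (fun n => (abs_of_nonneg (hg n)).trans_le (hC n))
      hl.1 (by linarith [hl.2])).mul_left (1 - l)).congr fun n => by ring
  have hterm : ∀ {u v : ℝ}, 0 ≤ u → u < v → v ≤ 1/2 → ∀ n,
      g (n + 1) * (u ^ (n + 1) * (1 - u)) ≤ g (n + 1) * (v ^ (n + 1) * (1 - v)) :=
    fun hu huv hv n => mul_le_mul_of_nonneg_left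
      (pow_succ_mul_one_sub_lt_of_lt hu huv hv n).le (hg _)
  intro u hu v hv huv
  obtain ⟨m, rfl⟩ := Nat.exists_eq_succ_of_ne_zero (fun h : k = 0 => by simp [h, hg0] at hk)
  rw [hform, hform]
  refine Summable.tsum_lt_tsum (i := m + 1) (fun n => ?_) ?_ (hsum u hu) (hsum v hv)
  · cases n with
    | zero => simp [hg0]
    | succ n => exact hterm hu.1 huv hv.2 n
  · exact mul_lt_mul_of_pos_left (pow_succ_mul_one_sub_lt_of_lt hu.1 huv hv.2 m) hk

lemma strictAntiOn_piFun {i : ℕ → ℝ} (hi : ∀ n, |i n| ≤ 1) (hi0 : i 0 = 1) {k : ℕ}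
    (hk : i k ≠ 1) : StrictAntiOn (PiFun i) (Set.Icc 0 (1/2)) := by
  have hle : ∀ n, i n ≤ 1 := fun n => (abs_le.mp (hi n)).2
  have hmono : StrictMonoOn (PiFun (1 - i)) (Set.Icc 0 (1/2)) :=
    strictMonoOn_piFun_of_nonneg (C := 2) (by simp [hi0]) (fun n => by simp [hle n])
      (fun n => by simp only [Pi.sub_apply, Pi.one_apply]; linarith [(abs_le.mp (hi n)).1])
      (k := k) (by simpa using lt_of_le_of_ne (hle k) hk)
  have hcompl : ∀ l ∈ Set.Icc (0 : ℝ) (1/2), PiFun i l = 1 - PiFun (1 - i) l := fun l hl => by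
    have h1 : l < 1 := by linarith [hl.2]
    rw [piFun_sub (summable_mul_pow_of_abs_le (C := 1) (by simp) hl.1 h1)
      (summable_mul_pow_of_abs_le hi hl.1 h1), piFun_one hl.1 h1]
    ring
  intro u hu v hv huv
  rw [hcompl u hu, hcompl v hv]
  linarith [hmono hu hv huv]

namespace IsCoding

variable {i j : ℕ → ℝ}

lemma abs_le (hi : IsCoding i) (n : ℕ) : |i n| ≤ 1 := by
  rcases hi n with h | h | h <;> norm_num [h]

lemma one_le_sub_of_lt (hi : IsCoding i) (hj : IsCoding j) {n : ℕ} (h : i n < j n) :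
    1 ≤ j n - i n := by
  rcases hi n with a | a | a <;> rcases hj n with b | b | b <;> rw [a, b] at h ⊢ <;> linarith

lemma head_eq_one_of_lt_piFun (hi : IsCoding i) {l : ℝ} (h0 : 0 ≤ l) (h1 : l < 1)
    (h : l < PiFun i l) : i 0 = 1 := by
  have htail := (_root_.abs_le.mp (abs_piFun_le (fun n => hi.abs_le (n + 1)) h0 h1)).2
  rw [piFun_eq_head_add (summable_mul_pow_of_abs_le hi.abs_le h0 h1)] at h
  rcases hi 0 with h' | h' | h'
  · rw [h'] at h; nlinarith
  · rw [h'] at h; nlinarith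
  · exact h'

lemma piFun_lt_piFun_of_lexLt (hi : IsCoding i) (hj : IsCoding j) {l : ℝ} (h0 : 0 < l)
    (h1 : l < 1/3) (hij : LexLt i j) : PiFun i l < PiFun j l := by
  obtain ⟨m, heq, hlt⟩ := hij
  have hl1 : l < 1 := by linarith
  have hsi := summable_mul_pow_of_abs_le hi.abs_le h0.le hl1
  have hsj := summable_mul_pow_of_abs_le hj.abs_le h0.le hl1
  have hbound : ∀ n, |(j - i) n| ≤ 2 := fun n =>
    (abs_sub _ _).trans (by linarith [hi.abs_le n, hj.abs_le n])
  have hpos : 0 < PiFun (j - i) l := by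
    rw [piFun_eq_pow_mul_of_eq_zero (summable_mul_pow_of_abs_le hbound h0.le hl1)
      (m := m) fun n hn => by simp [heq n hn]]
    refine mul_pos (pow_pos h0 m) (piFun_pos_of_one_le_head (fun n => hbound (n + m)) ?_ h0.le h1)
    simpa using hi.one_le_sub_of_lt hj hlt
  rw [piFun_sub hsj hsi] at hpos
  linarith

lemma lexLt_of_piFun_lt (hi : IsCoding i) (hj : IsCoding j) {l : ℝ} (h0 : 0 < l)
    (h1 : l < 1/3) (h : PiFun i l < PiFun j l) : LexLt i j := by
  -- `LexLt i j` is definitionally `toLex i < toLex j` for Mathlib's lexicographic order.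
  rcases lt_trichotomy (toLex i) (toLex j) with hij | hij | hji
  · exact hij
  · rw [toLex_inj.mp hij] at h
    exact (lt_irrefl _ h).elim
  · exact absurd (hj.piFun_lt_piFun_of_lexLt hi h0 h1 hji) h.not_gt

end IsCoding

theorem stmt19 (t : ℝ) (ht : t ∈ Set.Ioo (1/3 : ℝ) 1) :
    (∀ l ∈ Lam t, ∀ i : ℕ → ℝ, IsCoding i → PiFun i l = t → i 0 = 1) ∧
    (∀ l₁ l₂ : ℝ, l₁ ∈ Lam t ∩ Set.Ioo (0 : ℝ) (1/3) → l₂ ∈ Lam t ∩ Set.Ioo (0 : ℝ) (1/3) →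
      ∀ i j : ℕ → ℝ, IsCoding i → IsCoding j → PiFun i l₁ = t → PiFun j l₂ = t →
        l₁ < l₂ → LexLt i j) := by
  obtain ⟨ht₁, ht₂⟩ := ht
  have head : ∀ l ∈ Set.Ioc (0 : ℝ) (1/3), ∀ i, IsCoding i → PiFun i l = t → i 0 = 1 :=
    fun l hl i hi hit => hi.head_eq_one_of_lt_piFun hl.1.le (by linarith [hl.2])
      (by linarith [hl.2])
  refine ⟨fun l hl => head l hl.1, ?_⟩
  rintro l₁ l₂ ⟨⟨hl₁, -⟩, -⟩ ⟨-, hl₂0, hl₂⟩ i j hi hj hit hjt h12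
  obtain ⟨k, hk⟩ : ∃ k, i k ≠ 1 := by
    by_contra! hone
    rw [show i = 1 from funext hone, piFun_one hl₁.1.le (by linarith [hl₁.2])] at hit
    linarith
  have hanti : PiFun i l₂ < PiFun i l₁ :=
    strictAntiOn_piFun hi.abs_le (head l₁ hl₁ i hi hit) hk ⟨hl₁.1.le, by linarith [hl₁.2]⟩
      ⟨hl₂0.le, by linarith⟩ h12
  exact hi.lexLt_of_piFun_lt hj hl₂0 hl₂ (by rwa [hjt, ← hit])
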